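/- arXiv:math/0608090 — 6 statements merged into one kernel-verified Lean document; each statement's English description precedes it below -/
import Mathlib

section
/- Let G be a finite simple graph and I an independent set of G with vertex neighborhood N(I). For each k, the set of vertices of G^k that have at least one coordinate in I ∪ N(I) and whose first such coordinate lies in I, is an independent set of G^k. Moreover its fractional size tends to |I|/(|I|+|N(I)|) as k → ∞; consequently A(G) ≥ |I|/(|I|+|N(I)|). -/
/-!
Call a tuple good if its first coordinate in `I ∪ N(I)` lies in `I`. Two good tuples are never
adjacent in `G^k`: if they first meet `I ∪ N(I)` at the same position, both coordinates there lie
in the independent set `I`; otherwise, at the earlier of the two positions one coordinate lies in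
`I`, so the adjacent coordinate of the other tuple lies in `N(I)` before that tuple's first visit.

Splitting off the first coordinate, the number `s_k` of good tuples satisfies
`s_{k+1} = |I| n^k + (n - |I ∪ N(I)|) s_k`, hence `s_k / n^k = |I| / |I ∪ N(I)| · (1 - q^k)` with
`q = 1 - |I ∪ N(I)| / n < 1`. Since `s_k / n^k` is at most the independence ratio of `G^k`, the
limit of these ratios is at least `|I| / (|I| + |N(I)|)`.
-/

open SimpleGraph Filter Topology

variable {V W : Type*}

/-- The tensor (categorical) product of two simple graphs. -/
def tensorProd (G : SimpleGraph V) (H : SimpleGraph W) : SimpleGraph (V × W) where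
  Adj p q := G.Adj p.1 q.1 ∧ H.Adj p.2 q.2
  symm := ⟨fun _ _ h => ⟨h.1.symm, h.2.symm⟩⟩
  loopless := ⟨fun p h => G.loopless.irrefl p.1 h.1⟩

/-- The k-fold tensor power of a simple graph. -/
def tensorPow (G : SimpleGraph V) (k : ℕ) : SimpleGraph (Fin k → V) where
  Adj u v := u ≠ v ∧ ∀ i, G.Adj (u i) (v i)
  symm := ⟨fun _ _ h => ⟨h.1.symm, fun i => (h.2 i).symm⟩⟩
  loopless := ⟨fun _ h => h.1 rfl⟩

/-- The tensor product of k copies of G with m copies of H. -/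
def mixPow (G : SimpleGraph V) (H : SimpleGraph W) (k m : ℕ) :
    SimpleGraph ((Fin k → V) × (Fin m → W)) where
  Adj p q := p ≠ q ∧ (∀ i, G.Adj (p.1 i) (q.1 i)) ∧ ∀ j, H.Adj (p.2 j) (q.2 j)
  symm := ⟨fun _ _ h => ⟨h.1.symm, fun i => (h.2.1 i).symm, fun j => (h.2.2 j).symm⟩⟩
  loopless := ⟨fun _ h => h.1 rfl⟩

/-- A set of vertices is independent: no two of its members are adjacent. -/
def IsIndepSet (G : SimpleGraph V) (s : Set V) : Prop :=
  ∀ ⦃u⦄, u ∈ s → ∀ ⦃v⦄, v ∈ s → ¬ G.Adj u v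

/-- The independence number of a finite graph. -/
noncomputable def indepNum (G : SimpleGraph V) [Fintype V] : ℕ :=
  sSup {n | ∃ s : Finset V, _root_.IsIndepSet G ↑s ∧ s.card = n}

/-- The independence ratio of a finite graph. -/
noncomputable def indepRatio (G : SimpleGraph V) [Fintype V] : ℝ :=
  (_root_.indepNum G : ℝ) / (Fintype.card V : ℝ)

/-- The (vertex) neighborhood of a set of vertices. -/
def nbhdSet (G : SimpleGraph V) (s : Set V) : Set V := {v | ∃ u ∈ s, G.Adj u v}

/-- a(G): the maximum of |I|/(|I|+|N(I)|) over nonempty independent sets I. -/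
noncomputable def aRatio (G : SimpleGraph V) [Fintype V] : ℝ :=
  sSup {r | ∃ I : Finset V, I.Nonempty ∧ _root_.IsIndepSet G ↑I ∧
    r = (I.card : ℝ) / ((I.card : ℝ) + ((nbhdSet G ↑I).ncard : ℝ))}

/-- A fractional perfect matching of a finite graph. -/
def IsFPM (G : SimpleGraph V) [Fintype V] [DecidableEq V] (f : Sym2 V → ℝ) : Prop :=
  (∀ e, 0 ≤ f e) ∧ (∀ e, e ∉ G.edgeSet → f e = 0) ∧
  (∀ v : V, ∑ e ∈ Finset.univ.filter (fun e : Sym2 V => v ∈ e), f e ≤ 1) ∧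
  ∑ e : Sym2 V, f e = (Fintype.card V : ℝ) / 2

def firstHitSet (I U : Set V) (k : ℕ) : Set (Fin k → V) :=
  {u | ∃ i, u i ∈ I ∧ ∀ j < i, u j ∉ U}

theorem IsIndepSet.disjoint_nbhdSet {G : SimpleGraph V} {I : Set V} (hI : _root_.IsIndepSet G I) :
    Disjoint I (nbhdSet G I) :=
  Set.disjoint_left.2 fun _ hv ⟨_, hu, huv⟩ => hI hu hv huv

theorem isIndepSet_firstHitSet {G : SimpleGraph V} {I U : Set V} (hI : _root_.IsIndepSet G I)
    (hU : nbhdSet G I ⊆ U) (k : ℕ) :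
    _root_.IsIndepSet (tensorPow G k) (firstHitSet I U k) := by
  rintro u ⟨i, hui, hu⟩ v ⟨j, hvj, hv⟩ ⟨-, hadj⟩
  rcases lt_trichotomy i j with hij | rfl | hji
  · exact hv i hij (hU ⟨u i, hui, hadj i⟩)
  · exact hI hui hvj (hadj i)
  · exact hu j hji (hU ⟨v j, hvj, (hadj j).symm⟩)

theorem firstHitSet_succ (I U : Set V) (k : ℕ) :
    firstHitSet I U (k + 1) =
      (Fin.consEquiv fun _ => V).symm ⁻¹' (I ×ˢ Set.univ ∪ Uᶜ ×ˢ firstHitSet I U k) := by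
  ext u
  simp only [firstHitSet, Set.mem_preimage, Fin.consEquiv_symm_apply, Set.mem_union,
    Set.mem_prod, Set.mem_univ, and_true, Set.mem_compl_iff, Set.mem_ofPred_eq]
  constructor
  · rintro ⟨i, hi, hlt⟩
    cases i using Fin.cases with
    | zero => exact Or.inl hi
    | succ i =>
      exact Or.inr ⟨hlt 0 i.succ_pos, i, hi, fun j hj => hlt j.succ (Fin.succ_lt_succ_iff.2 hj)⟩
  · rintro (h0 | ⟨h0, i, hi, hlt⟩)
    · exact ⟨0, h0, fun j hj => absurd hj (Fin.not_lt_zero j)⟩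
    · refine ⟨i.succ, hi, fun j hj => ?_⟩
      cases j using Fin.cases with
      | zero => exact h0
      | succ j => exact hlt j (Fin.succ_lt_succ_iff.1 hj)

theorem ncard_firstHitSet_succ [Finite V] {I U : Set V} (hIU : I ⊆ U) (k : ℕ) :
    (firstHitSet I U (k + 1)).ncard =
      I.ncard * Nat.card V ^ k + Uᶜ.ncard * (firstHitSet I U k).ncard := by
  have hdisj : Disjoint (I ×ˢ (Set.univ : Set (Fin k → V))) (Uᶜ ×ˢ firstHitSet I U k) :=
    Set.disjoint_prod.2 (Or.inl (Set.disjoint_compl_right_iff_subset.2 hIU))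
  rw [firstHitSet_succ, ← Equiv.image_eq_preimage_symm,
    Set.ncard_image_of_injective _ (Equiv.injective _), Set.ncard_union_eq hdisj,
    Set.ncard_prod, Set.ncard_prod, Set.ncard_univ, Nat.card_fun, Nat.card_fin]

theorem ncard_mul_ncard_firstHitSet_add [Finite V] {I U : Set V} (hIU : I ⊆ U) (k : ℕ) :
    U.ncard * (firstHitSet I U k).ncard + I.ncard * Uᶜ.ncard ^ k =
      I.ncard * Nat.card V ^ k := by
  induction k with
  | zero => simp [firstHitSet]
  | succ k ih =>
    rw [ncard_firstHitSet_succ hIU, ← Set.ncard_add_ncard_compl U] at *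
    linear_combination Uᶜ.ncard * ih

theorem tendsto_ncard_firstHitSet_div_pow [Finite V] {I U : Set V} (hIU : I ⊆ U) :
    Tendsto (fun k => ((firstHitSet I U k).ncard : ℝ) / (Nat.card V : ℝ) ^ k) atTop
      (𝓝 (I.ncard / U.ncard)) := by
  rcases U.eq_empty_or_nonempty with rfl | hU
  · simp [Set.subset_empty_iff.1 hIU, firstHitSet]
  have hUpos : (0 : ℝ) < U.ncard := by exact_mod_cast (Set.ncard_pos).2 hU
  have hcard : (Nat.card V : ℝ) = U.ncard + Uᶜ.ncard := by
    exact_mod_cast (Set.ncard_add_ncard_compl U).symm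
  have hpos : (0 : ℝ) < Nat.card V := by rw [hcard]; positivity
  have hq : (Uᶜ.ncard : ℝ) / Nat.card V < 1 := by
    rw [div_lt_one hpos]; linarith
  have hseq : ∀ k, ((firstHitSet I U k).ncard : ℝ) / (Nat.card V : ℝ) ^ k =
      I.ncard / U.ncard * (1 - ((Uᶜ.ncard : ℝ) / Nat.card V) ^ k) := by
    intro k
    have h : (U.ncard * (firstHitSet I U k).ncard + I.ncard * Uᶜ.ncard ^ k : ℝ) =
        I.ncard * Nat.card V ^ k := by exact_mod_cast ncard_mul_ncard_firstHitSet_add hIU k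
    rw [div_pow]
    field_simp
    linear_combination h
  simp_rw [hseq]
  simpa using ((tendsto_pow_atTop_nhds_zero_of_lt_one (by positivity) hq).const_sub 1).const_mul
    ((I.ncard : ℝ) / U.ncard)

theorem IsIndepSet.ncard_le_indepNum [Fintype V] {G : SimpleGraph V} {s : Set V}
    (hs : _root_.IsIndepSet G s) : s.ncard ≤ _root_.indepNum G :=
  le_csSup ⟨Fintype.card V, by rintro _ ⟨t, -, rfl⟩; exact t.card_le_univ⟩
    ⟨s.toFinite.toFinset, by simpa using hs, (Set.ncard_eq_toFinset_card s).symm⟩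

theorem IsIndepSet.ncard_div_le_indepRatio [Fintype V] {G : SimpleGraph V} {s : Set V}
    (hs : _root_.IsIndepSet G s) : (s.ncard : ℝ) / Fintype.card V ≤ indepRatio G :=
  div_le_div_of_nonneg_right (by exact_mod_cast hs.ncard_le_indepNum) (Nat.cast_nonneg _)

theorem stmt6_general (G : SimpleGraph V) [Fintype V]
    (I : Finset V) (hI : _root_.IsIndepSet G ↑I)
    (S : (k : ℕ) → Set (Fin k → V))
    (hS : ∀ k, S k = {u | ∃ i : Fin k, u i ∈ I ∧
      ∀ j : Fin k, j < i → u j ∉ (↑I ∪ nbhdSet G ↑I : Set V)}) :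
    (∀ k, _root_.IsIndepSet (tensorPow G k) (S k)) ∧
    Tendsto (fun k : ℕ => ((S k).ncard : ℝ) / ((Fintype.card V : ℝ)) ^ k) atTop
      (𝓝 ((I.card : ℝ) / ((I.card : ℝ) + ((nbhdSet G ↑I).ncard : ℝ)))) ∧
    (∀ L : ℝ, Tendsto (fun n : ℕ => indepRatio (tensorPow G (n + 1))) atTop (𝓝 L) →
      (I.card : ℝ) / ((I.card : ℝ) + ((nbhdSet G ↑I).ncard : ℝ)) ≤ L) := by
  obtain rfl : S = firstHitSet (I : Set V) (↑I ∪ nbhdSet G ↑I) := funext hS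
  have hindep := isIndepSet_firstHitSet hI (Set.subset_union_right (s := (I : Set V)))
  have hlim := tendsto_ncard_firstHitSet_div_pow
    (Set.subset_union_left (s := (I : Set V)) (t := nbhdSet G ↑I))
  rw [Set.ncard_union_eq hI.disjoint_nbhdSet, Set.ncard_coe_finset, Nat.card_eq_fintype_card,
    Nat.cast_add] at hlim
  refine ⟨hindep, hlim, fun L hL => le_of_tendsto_of_tendsto' (hlim.comp (tendsto_add_atTop_nat 1))
    hL fun k => ?_⟩
  simpa using (hindep (k + 1)).ncard_div_le_indepRatio

theorem stmt6 (G : SimpleGraph V) [Fintype V] [Nonempty V]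
    (I : Finset V) (hI : _root_.IsIndepSet G ↑I)
    (S : (k : ℕ) → Set (Fin k → V))
    (hS : ∀ k, S k = {u | ∃ i : Fin k, u i ∈ I ∧
      ∀ j : Fin k, j < i → u j ∉ (↑I ∪ nbhdSet G ↑I : Set V)}) :
    (∀ k, _root_.IsIndepSet (tensorPow G k) (S k)) ∧
    Tendsto (fun k : ℕ => ((S k).ncard : ℝ) / ((Fintype.card V : ℝ)) ^ k) atTop
      (𝓝 ((I.card : ℝ) / ((I.card : ℝ) + ((nbhdSet G ↑I).ncard : ℝ)))) ∧
    (∀ L : ℝ, Tendsto (fun n : ℕ => indepRatio (tensorPow G (n + 1))) atTop (𝓝 L) →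
      (I.card : ℝ) / ((I.card : ℝ) + ((nbhdSet G ↑I).ncard : ℝ)) ≤ L) :=
  stmt6_general G I hI S hS
end

section
/- Let G be a finite simple graph and I an independent set of G. For each k, the set of all vertices of G^k having strictly more than k/2 coordinates in I is an independent set of G^k. -/
open SimpleGraph Filter Topology

variable {V W : Type*}

theorem tensorPow_disjoint_of_adj {G : SimpleGraph V} {I : Set V} (hI : _root_.IsIndepSet G I)
    {k : ℕ} {u v : Fin k → V} (huv : (tensorPow G k).Adj u v) :
    Disjoint {i | u i ∈ I} {i | v i ∈ I} :=
  Set.disjoint_left.2 fun i hui hvi => hI hui hvi (huv.2 i)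

theorem stmt7 (G : SimpleGraph V) (I : Set V) (hI : _root_.IsIndepSet G I) (k : ℕ) :
    _root_.IsIndepSet (tensorPow G k)
      {u : Fin k → V | k < 2 * {i : Fin k | u i ∈ I}.ncard} := by
  intro u hu v hv huv
  have hmeet : Nat.card (Fin k) < {i | u i ∈ I}.ncard + {i | v i ∈ I}.ncard := by
    rw [Nat.card_fin]
    simp only [Set.mem_ofPred_eq] at hu hv
    omega
  exact Set.not_disjoint_iff_nonempty_inter.2 (Set.nonempty_inter_of_lt_ncard_add_ncard hmeet)
    (tensorPow_disjoint_of_adj hI huv)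
end

section
/- If a finite simple graph G satisfies i(G) > 1/2, then A(G) = 1, i.e., the independence ratios of tensor powers i(G^k) tend to 1 as k → ∞. -/
open SimpleGraph Filter Topology

variable {V W : Type*}

open Finset

/-!
Let `I` be a maximum independent set of `G`, so `#I > #Iᶜ`. In `G^K` the tuples having more than
`K/2` coordinates in `I` form an independent set: two such tuples share a coordinate in `I`, where
they cannot be adjacent. The other tuples are few by a Chernoff bound: give a tuple the weight
`∏ᵢ w (v i)` with `w = t⁻¹` on `I` and `w = t` off `I`, for some `t ≥ 1`. A tuple with `c ≤ K/2`
coordinates in `I` weighs `t ^ (K - 2c) ≥ 1`, while all tuples together weigh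
`(#I / t + #Iᶜ * t) ^ K`, and `t = 2#I / |V|` makes the base smaller than `|V|`.
-/

section IndepNum

variable [Fintype V] (G : SimpleGraph V)

lemma card_le_indepNum {s : Finset V} (hs : _root_.IsIndepSet G ↑s) :
    #s ≤ _root_.indepNum G :=
  le_csSup ⟨Fintype.card V, fun _ ⟨t, _, ht⟩ => ht ▸ t.card_le_univ⟩ ⟨s, hs, rfl⟩

lemma exists_isIndepSet_card_eq_indepNum :
    ∃ s : Finset V, _root_.IsIndepSet G ↑s ∧ #s = _root_.indepNum G :=
  Nat.sSup_mem (s := {n | ∃ s : Finset V, _root_.IsIndepSet G ↑s ∧ #s = n})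
    ⟨0, ∅, by simp [_root_.IsIndepSet], rfl⟩
    ⟨Fintype.card V, fun _ ⟨t, _, ht⟩ => ht ▸ t.card_le_univ⟩

lemma indepRatio_le_one : indepRatio G ≤ 1 := by
  obtain ⟨s, -, hs⟩ := exists_isIndepSet_card_eq_indepNum G
  rw [indepRatio, ← hs]
  exact div_le_one_of_le₀ (mod_cast s.card_le_univ) (Nat.cast_nonneg _)

lemma card_lt_two_mul_indepNum (h : 1 / 2 < indepRatio G) :
    Fintype.card V < 2 * _root_.indepNum G := by
  by_contra! hle
  refine h.not_ge (div_le_of_le_mul₀ (Nat.cast_nonneg _) (by norm_num) ?_)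
  rw [one_div_mul_eq_div, le_div_iff₀ two_pos]
  exact_mod_cast (mul_comm _ 2).trans_le hle

end IndepNum

section Majority

variable [Fintype V] [DecidableEq V]

def majorityTuples (I : Finset V) (K : ℕ) : Finset (Fin K → V) :=
  {v | K < 2 * #{i | v i ∈ I}}

lemma isIndepSet_majorityTuples {G : SimpleGraph V} {I : Finset V}
    (hI : _root_.IsIndepSet G ↑I) (K : ℕ) :
    _root_.IsIndepSet (tensorPow G K) ↑(majorityTuples I K) := by
  rintro u hu v hv ⟨-, hadj⟩
  simp only [majorityTuples, coe_filter, Set.mem_ofPred_eq] at hu hv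
  obtain ⟨i, hi⟩ := inter_nonempty_of_card_lt_card_add_card (subset_univ _) (subset_univ _)
    (by rw [card_univ, Fintype.card_fin]; omega :
      #(univ : Finset (Fin K)) < #{i | u i ∈ I} + #{i | v i ∈ I})
  simp only [mem_inter, mem_filter] at hi
  exact hI hi.1.2 hi.2.2 (hadj i)

lemma card_compl_majorityTuples_le (I : Finset V) {t : ℝ} (ht : 1 ≤ t) (K : ℕ) :
    (#(majorityTuples I K)ᶜ : ℝ) ≤ (#I / t + #Iᶜ * t) ^ K := by
  set w : V → ℝ := fun x => if x ∈ I then t⁻¹ else t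
  have hw : 0 ≤ w := fun x => by dsimp only [w]; split_ifs <;> positivity
  have one_le_weight (v : Fin K → V) (hv : v ∈ (majorityTuples I K)ᶜ) : 1 ≤ ∏ i, w (v i) := by
    have hc : #{i | v i ∈ I} ≤ #{i | v i ∉ I} := by
      have := card_filter_add_card_filter_not (s := univ) (fun i => v i ∈ I)
      simp only [majorityTuples, mem_compl, mem_filter, mem_univ, true_and] at hv
      rw [card_univ, Fintype.card_fin] at this
      omega
    calc (1 : ℝ) = t⁻¹ ^ #{i | v i ∈ I} * t ^ #{i | v i ∈ I} := by
          rw [← mul_pow, inv_mul_cancel₀ (by positivity), one_pow]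
      _ ≤ t⁻¹ ^ #{i | v i ∈ I} * t ^ #{i | v i ∉ I} := by gcongr
      _ = ∏ i, w (v i) := by simp only [w, prod_ite, prod_const]
  have sum_weight : ∑ x, w x = #I / t + #Iᶜ * t := by
    simp only [w, sum_ite, sum_const, filter_mem_eq_inter, univ_inter, nsmul_eq_mul,
      div_eq_mul_inv, filter_not, compl_eq_univ_sdiff]
  calc (#(majorityTuples I K)ᶜ : ℝ)
      ≤ ∑ v ∈ (majorityTuples I K)ᶜ, ∏ i, w (v i) := by
        rw [card_eq_sum_ones, Nat.cast_sum, Nat.cast_one]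
        exact sum_le_sum one_le_weight
    _ ≤ ∑ v : Fin K → V, ∏ i, w (v i) :=
        sum_le_sum_of_subset_of_nonneg (subset_univ _) fun v _ _ => prod_nonneg fun i _ => hw _
    _ = (#I / t + #Iᶜ * t) ^ K := by rw [← Fintype.sum_pow, sum_weight]

lemma one_sub_pow_le_indepRatio_tensorPow {G : SimpleGraph V} {I : Finset V}
    (hI : _root_.IsIndepSet G ↑I) {t : ℝ} (ht : 1 ≤ t) (hV : 0 < Fintype.card V) (K : ℕ) :
    1 - ((#I / t + #Iᶜ * t) / Fintype.card V) ^ K ≤ indepRatio (tensorPow G K) := by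
  have hsplit : (#(majorityTuples I K) : ℝ) + #(majorityTuples I K)ᶜ =
      (Fintype.card V : ℝ) ^ K := by
    rw [← Nat.cast_add, card_add_card_compl, Fintype.card_fun, Fintype.card_fin, Nat.cast_pow]
  have hmajority : (#(majorityTuples I K) : ℝ) ≤ _root_.indepNum (tensorPow G K) :=
    mod_cast card_le_indepNum _ (isIndepSet_majorityTuples hI K)
  have hVK : (0 : ℝ) < (Fintype.card V : ℝ) ^ K := by positivity
  rw [indepRatio, Fintype.card_fun, Fintype.card_fin, Nat.cast_pow, le_div_iff₀ hVK, sub_mul,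
    one_mul, div_pow, div_mul_cancel₀ _ hVK.ne']
  linarith [card_compl_majorityTuples_le I ht K]

end Majority

lemma exists_one_le_div_add_mul_lt {a b : ℝ} (hb : 0 ≤ b) (hba : b < a) :
    ∃ t, 1 ≤ t ∧ a / t + b * t < a + b := by
  have ha : 0 < a := by linarith
  have hab : 0 < a + b := by linarith
  refine ⟨2 * a / (a + b), by rw [le_div_iff₀ hab]; linarith, ?_⟩
  field_simp
  nlinarith [mul_pos (sub_pos.2 hba) (sub_pos.2 hba)]

theorem stmt8_general (G : SimpleGraph V) [Fintype V]
    (h : 1 / 2 < indepRatio G) :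
    Tendsto (fun k : ℕ => indepRatio (tensorPow G (k + 1))) atTop (𝓝 1) := by
  classical
  obtain ⟨I, hI, hIcard⟩ := exists_isIndepSet_card_eq_indepNum G
  have hcard := card_add_card_compl I
  have hmaj : #Iᶜ < #I := by have := card_lt_two_mul_indepNum G h; omega
  have hV : 0 < Fintype.card V := by omega
  obtain ⟨t, ht, hlt⟩ :=
    exists_one_le_div_add_mul_lt (a := #I) (Nat.cast_nonneg _) (mod_cast hmaj)
  set q := (#I / t + #Iᶜ * t) / Fintype.card V
  have hq0 : 0 ≤ q := by
    have : 0 < t := by linarith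
    positivity
  have hq1 : q < 1 := by
    rw [div_lt_one (mod_cast hV), ← hcard, Nat.cast_add]
    exact hlt
  have hlow : Tendsto (fun k : ℕ => 1 - q ^ (k + 1)) atTop (𝓝 1) := by
    simpa using tendsto_const_nhds.sub
      ((tendsto_pow_atTop_nhds_zero_of_lt_one hq0 hq1).comp (tendsto_add_atTop_nat 1))
  exact tendsto_of_tendsto_of_tendsto_of_le_of_le hlow tendsto_const_nhds
    (fun k => one_sub_pow_le_indepRatio_tensorPow hI ht hV (k + 1))
    (fun k => indepRatio_le_one _)

theorem stmt8 (G : SimpleGraph V) [Fintype V] [Nonempty V]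
    (h : 1 / 2 < indepRatio G) :
    Tendsto (fun k : ℕ => indepRatio (tensorPow G (k + 1))) atTop (𝓝 1) :=
  stmt8_general G h
end

section
/- (Tutte's lemma) Let G be a finite simple graph. If every independent set I of G satisfies |N(I)| ≥ |I|, then every subset S of V(G) satisfies |N(S)| ≥ |S|. -/
open SimpleGraph Filter Topology

variable {V W : Type*}

/- The vertices of S with no neighbour in S form an independent set D whose neighbourhood
lies in N(S) \ S. Applying the hypothesis to D gives |S \ N(S)| ≤ |N(S) \ S|, which is
|S| ≤ |N(S)| after removing S ∩ N(S) from both sides. -/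

theorem isIndepSet_sdiff_nbhdSet (G : SimpleGraph V) (S : Set V) :
    _root_.IsIndepSet G (S \ nbhdSet G S) :=
  fun u hu _ hv hadj => hv.2 ⟨u, hu.1, hadj⟩

theorem nbhdSet_sdiff_nbhdSet_subset (G : SimpleGraph V) (S : Set V) :
    nbhdSet G (S \ nbhdSet G S) ⊆ nbhdSet G S \ S := by
  rintro v ⟨u, hu, hadj⟩
  exact ⟨⟨u, hu.1, hadj⟩, fun hvS => hu.2 ⟨v, hvS, hadj.symm⟩⟩

theorem stmt9 (G : SimpleGraph V) [Fintype V]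
    (h : ∀ I : Set V, _root_.IsIndepSet G I → I.ncard ≤ (nbhdSet G I).ncard) :
    ∀ S : Set V, S.ncard ≤ (nbhdSet G S).ncard := by
  intro S
  rw [Set.ncard_le_ncard_iff_ncard_sdiff_le_ncard_sdiff]
  exact (h _ (isIndepSet_sdiff_nbhdSet G S)).trans
    (Set.ncard_le_ncard (nbhdSet_sdiff_nbhdSet_subset G S))
end

section
/- If f is a fractional perfect matching of G and g is a fractional perfect matching of H, then assigning the edge {(u,v),(u',v')} of G × H the weight f({u,u'}) · g({v,v'}) (summed appropriately over the edge pairs projecting to it) yields a fractional perfect matching of G × H. In particular, if G has a fractional perfect matching then so does G^k for every k ≥ 1. -/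
open SimpleGraph Filter Topology

variable {V W : Type*}

/-! Both matchings are built as product weights: the weight of an edge of the product is the product
of the weights of its coordinate edges. Its sum at a vertex is then the product of the coordinate
sums at the coordinate vertices, hence at most `1`; and counting each edge from both endpoints,
the total weight is half of the product of the coordinate totals `|V(G)|` and `|V(H)|`. -/

open Finset

section FractionalMatching

variable {α : Type*} [Fintype α] [DecidableEq α]

theorem sum_filter_mem_eq_sum_mk (f : Sym2 α → ℝ) (x : α) :
    ∑ e ∈ univ.filter (fun e : Sym2 α => x ∈ e), f e = ∑ y, f s(x, y) := by
  symm
  refine sum_bij (fun y _ => s(x, y)) (fun y _ => by simp)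
    (fun _ _ _ _ h => Sym2.congr_right.mp h) (fun e he => ?_) (fun _ _ => rfl)
  have hx : x ∈ e := (mem_filter.mp he).2
  exact ⟨Sym2.Mem.other hx, mem_univ _, Sym2.other_spec hx⟩

theorem sum_sum_mk_eq_two_mul_sum (f : Sym2 α → ℝ) (hdiag : ∀ a, f s(a, a) = 0) :
    ∑ a, ∑ b, f s(a, b) = 2 * ∑ e, f e := by
  have hpair (e : Sym2 α) : ∑ a, (if a ∈ e then f e else 0) = 2 * f e := by
    induction e using Sym2.ind with
    | _ u v =>
      rw [← sum_filter, sum_const, nsmul_eq_mul]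
      rcases eq_or_ne u v with rfl | huv
      · simp [hdiag]
      · have hfilter : univ.filter (· ∈ s(u, v)) = {u, v} := by ext; simp
        rw [hfilter, card_pair huv]
        norm_num
  calc ∑ a, ∑ b, f s(a, b) = ∑ a, ∑ e, if a ∈ e then f e else 0 := by
        simp only [← sum_filter, sum_filter_mem_eq_sum_mk]
    _ = ∑ e, ∑ a, if a ∈ e then f e else 0 := sum_comm
    _ = 2 * ∑ e, f e := by simp only [hpair, mul_sum]

variable {G : SimpleGraph α} {f : Sym2 α → ℝ}

theorem isFPM_of_sum_mk (hf0 : ∀ a b, 0 ≤ f s(a, b))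
    (hfG : ∀ a b, ¬ G.Adj a b → f s(a, b) = 0) (hle : ∀ a, ∑ b, f s(a, b) ≤ 1)
    (htotal : ∑ a, ∑ b, f s(a, b) = Fintype.card α) : IsFPM G f := by
  refine ⟨fun e => ?_, fun e he => ?_, fun a => ?_, ?_⟩
  · induction e using Sym2.ind with
    | _ a b => exact hf0 a b
  · induction e using Sym2.ind with
    | _ a b => exact hfG a b he
  · rw [sum_filter_mem_eq_sum_mk]
    exact hle a
  · have := sum_sum_mk_eq_two_mul_sum f fun a => hfG a a G.irrefl
    linarith

namespace IsFPM

theorem nonneg (hf : IsFPM G f) (a b : α) : 0 ≤ f s(a, b) := hf.1 _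

theorem eq_zero_of_not_adj (hf : IsFPM G f) {a b : α} (h : ¬ G.Adj a b) : f s(a, b) = 0 :=
  hf.2.1 _ h

theorem sum_mk_le_one (hf : IsFPM G f) (a : α) : ∑ b, f s(a, b) ≤ 1 := by
  rw [← sum_filter_mem_eq_sum_mk]
  exact hf.2.2.1 a

theorem sum_mk_nonneg (hf : IsFPM G f) (a : α) : 0 ≤ ∑ b, f s(a, b) :=
  sum_nonneg fun b _ => hf.nonneg a b

theorem sum_sum_mk (hf : IsFPM G f) : ∑ a, ∑ b, f s(a, b) = Fintype.card α := by
  rw [sum_sum_mk_eq_two_mul_sum f fun a => hf.eq_zero_of_not_adj G.irrefl, hf.2.2.2]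
  ring

end IsFPM

end FractionalMatching

theorem IsFPM.tensorProd {G : SimpleGraph V} {H : SimpleGraph W}
    [Fintype V] [Fintype W] [DecidableEq V] [DecidableEq W]
    {f : Sym2 V → ℝ} {g : Sym2 W → ℝ} (hf : IsFPM G f) (hg : IsFPM H g)
    {w : Sym2 (V × W) → ℝ} (hw : ∀ p q : V × W, w s(p, q) = f s(p.1, q.1) * g s(p.2, q.2)) :
    IsFPM (_root_.tensorProd G H) w := by
  have hrow (p : V × W) : ∑ q, w s(p, q) = (∑ a, f s(p.1, a)) * ∑ b, g s(p.2, b) := by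
    simp only [Fintype.sum_prod_type, hw, Fintype.sum_mul_sum]
  refine isFPM_of_sum_mk (fun p q => ?_) (fun p q hpq => ?_) (fun p => ?_) ?_
  · rw [hw]
    exact mul_nonneg (hf.nonneg _ _) (hg.nonneg _ _)
  · rw [hw]
    by_cases hG : G.Adj p.1 q.1
    · rw [hg.eq_zero_of_not_adj fun hH => hpq ⟨hG, hH⟩, mul_zero]
    · rw [hf.eq_zero_of_not_adj hG, zero_mul]
  · rw [hrow]
    exact mul_le_one₀ (hf.sum_mk_le_one _) (hg.sum_mk_nonneg _) (hg.sum_mk_le_one _)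
  · simp only [hrow, Fintype.sum_prod_type, ← Finset.sum_mul_sum, hf.sum_sum_mk, hg.sum_sum_mk,
      Fintype.card_prod, Nat.cast_mul]

def tensorPowWeight (f : Sym2 V → ℝ) (k : ℕ) : Sym2 (Fin k → V) → ℝ :=
  Sym2.lift ⟨fun u v => ∏ i, f s(u i, v i), fun u v => by simp only [Sym2.eq_swap]⟩

@[simp]
theorem tensorPowWeight_mk (f : Sym2 V → ℝ) {k : ℕ} (u v : Fin k → V) :
    tensorPowWeight f k s(u, v) = ∏ i, f s(u i, v i) :=
  Sym2.lift_mk _ u v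

theorem IsFPM.tensorPow {G : SimpleGraph V} [Fintype V] [DecidableEq V] {f : Sym2 V → ℝ}
    (hf : IsFPM G f) {k : ℕ} (hk : 0 < k) :
    IsFPM (_root_.tensorPow G k) (tensorPowWeight f k) := by
  have hrow (u : Fin k → V) : ∑ v, tensorPowWeight f k s(u, v) = ∏ i, ∑ y, f s(u i, y) := by
    simp only [tensorPowWeight_mk, Fintype.prod_sum]
  refine isFPM_of_sum_mk (fun u v => ?_) (fun u v huv => ?_) (fun u => ?_) ?_
  · rw [tensorPowWeight_mk]
    exact prod_nonneg fun i _ => hf.nonneg _ _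
  · rw [tensorPowWeight_mk]
    by_cases hall : ∀ i, G.Adj (u i) (v i)
    · obtain rfl : u = v := not_ne_iff.mp fun hne => huv ⟨hne, hall⟩
      exact prod_eq_zero (mem_univ ⟨0, hk⟩) (hf.eq_zero_of_not_adj G.irrefl)
    · obtain ⟨i, hi⟩ := not_forall.mp hall
      exact prod_eq_zero (mem_univ i) (hf.eq_zero_of_not_adj hi)
  · rw [hrow]
    exact prod_le_one (fun i _ => hf.sum_mk_nonneg _) (fun i _ => hf.sum_mk_le_one _)
  · calc ∑ u, ∑ v, tensorPowWeight f k s(u, v) = ∏ _i : Fin k, ∑ a, ∑ y, f s(a, y) := by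
          simp only [hrow, Fintype.prod_sum]
      _ = Fintype.card (Fin k → V) := by
          simp [hf.sum_sum_mk]

theorem stmt12 (G : SimpleGraph V) (H : SimpleGraph W)
    [Fintype V] [Fintype W] [DecidableEq V] [DecidableEq W]
    (f : Sym2 V → ℝ) (g : Sym2 W → ℝ) (hf : IsFPM G f) (hg : IsFPM H g)
    (w : Sym2 (V × W) → ℝ)
    (hw : ∀ p q : V × W, w s(p, q) = f s(p.1, q.1) * g s(p.2, q.2)) :
    IsFPM (tensorProd G H) w ∧
    ∀ k : ℕ, 1 ≤ k → ∃ h : Sym2 (Fin k → V) → ℝ, IsFPM (tensorPow G k) h :=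
  ⟨hf.tensorProd hg hw, fun _ hk => ⟨_, hf.tensorPow hk⟩⟩
end

section
/- For every finite simple graph G and every k ≥ 2, the independence ratio of the tensor product with the complete graph satisfies i(G × K_k) ≤ max{a(G), 1/k}, where a(G) is the maximum over independent sets I of G of |I|/(|I|+|N(I)|). -/
open SimpleGraph Filter Topology

variable {V W : Type*}

/-!
Let `S` be a maximum independent set of `G × K_k` and `f u` the number of its vertices in the copy
of `u`. Two vertices of `S` in the copy of `u` leave no colour free in an adjacent copy, so the
vertices with `f u ≥ 2` form an independent set `A` of `G` whose neighbourhood `N(A)` meets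
no vertex of `S`. Hence `|S| ≤ k|A| + (n - |A| - |N(A)|)`, and `|A| ≤ a(G) (|A| + |N(A)|)`
bounds this by `max (a(G), 1/k) · kn`.
-/

open Finset

section IndependenceNumber

variable [Fintype V] (G : SimpleGraph V)

lemma aRatio_nonneg : 0 ≤ aRatio G :=
  Real.sSup_nonneg (by rintro _ ⟨I, -, -, rfl⟩; positivity)

lemma card_le_aRatio_mul {I : Finset V} (hI : _root_.IsIndepSet G ↑I) :
    (#I : ℝ) ≤ aRatio G * (#I + (nbhdSet G ↑I).ncard) := by
  rcases I.eq_empty_or_nonempty with rfl | hne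
  · simpa using mul_nonneg (aRatio_nonneg G) (Nat.cast_nonneg _)
  · have hpos : (0 : ℝ) < #I + (nbhdSet G ↑I).ncard := by
      have : (0 : ℝ) < #I := by exact_mod_cast hne.card_pos
      positivity
    rw [← div_le_iff₀ hpos]
    refine le_csSup ⟨1, ?_⟩ ⟨I, hne, hI, rfl⟩
    rintro _ ⟨J, -, -, rfl⟩
    exact div_le_one_of_le₀ (le_add_of_nonneg_right (by positivity)) (by positivity)

end IndependenceNumber

section Weights

variable [Fintype V] {G : SimpleGraph V} {f : V → ℕ} {k : ℕ}

lemma isIndepSet_filter_two_le (hf : ∀ u v, G.Adj u v → 2 ≤ f u → f v = 0) :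
    _root_.IsIndepSet G ↑(univ.filter (2 ≤ f ·)) := by
  intro u hu v hv huv
  simp only [coe_filter, mem_univ, true_and, Set.mem_ofPred_eq] at hu hv
  have := hf u v huv hu
  omega

lemma sum_le_mul_card_add_card_compl [DecidableEq V] {A B : Finset V} (hAB : Disjoint A B)
    (hA : ∀ u ∈ A, f u ≤ k) (hB : ∀ u ∈ B, f u = 0) (hC : ∀ u ∉ A ∪ B, f u ≤ 1) :
    ∑ u, f u ≤ k * #A + #(A ∪ B)ᶜ := by
  rw [← sum_add_sum_compl (A ∪ B) f, sum_union hAB, sum_eq_zero hB, add_zero]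
  gcongr
  · simpa [mul_comm] using sum_le_sum hA
  · simpa using sum_le_sum fun u hu => hC u (mem_compl.mp hu)

lemma sum_le_max_aRatio_mul (hk : 0 < k) (hfk : ∀ u, f u ≤ k)
    (hf : ∀ u v, G.Adj u v → 2 ≤ f u → f v = 0) :
    (∑ u, f u : ℝ) ≤ max (aRatio G) (1 / k) * k * Fintype.card V := by
  classical
  set A := univ.filter (2 ≤ f ·)
  set B := (nbhdSet G ↑A).toFinset
  have hAind : _root_.IsIndepSet G ↑A := isIndepSet_filter_two_le hf
  have hB : ∀ v ∈ B, f v = 0 := by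
    intro v hv
    obtain ⟨u, hu, huv⟩ := Set.mem_toFinset.mp hv
    exact hf u v huv (mem_filter.mp hu).2
  have hAB : Disjoint A B := disjoint_left.mpr fun u huA huB => by
    have := hB u huB
    have := (mem_filter.mp huA).2
    omega
  have hsum : ∑ u, f u ≤ k * #A + #(A ∪ B)ᶜ :=
    sum_le_mul_card_add_card_compl hAB (fun u _ => hfk u) hB fun u hu => by
      have : ¬ 2 ≤ f u := fun h => hu (mem_union_left _ (mem_filter.mpr ⟨mem_univ u, h⟩))
      omega
  have hcard : #A + #B + #(A ∪ B)ᶜ = Fintype.card V := by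
    rw [← card_union_of_disjoint hAB, card_add_card_compl]
  have hA : (#A : ℝ) ≤ aRatio G * (#A + #B) := by
    simpa [B, Set.ncard_eq_toFinset_card'] using card_le_aRatio_mul G hAind
  set r := max (aRatio G) (1 / k)
  have hk' : (0 : ℝ) < k := by exact_mod_cast hk
  have hrk : 1 ≤ r * k := by
    have := (div_le_iff₀ hk').mp (le_max_right (aRatio G) (1 / k))
    linarith
  have hAr : (#A : ℝ) ≤ r * (#A + #B) :=
    hA.trans (mul_le_mul_of_nonneg_right (le_max_left _ _) (by positivity))
  have hsum' : (∑ u, f u : ℝ) ≤ k * #A + #(A ∪ B)ᶜ := by exact_mod_cast hsum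
  have hcard' : (#A + #B + #(A ∪ B)ᶜ : ℝ) = Fintype.card V := by exact_mod_cast hcard
  rw [← hcard']
  nlinarith [mul_le_mul_of_nonneg_left hAr hk'.le,
    mul_le_mul_of_nonneg_right hrk (Nat.cast_nonneg (α := ℝ) #(A ∪ B)ᶜ)]

end Weights

section TensorProduct

variable [DecidableEq V] {G : SimpleGraph V}

lemma card_filter_fst_eq_le [Fintype W] (S : Finset (V × W)) (u : V) :
    #(S.filter (·.1 = u)) ≤ Fintype.card W :=
  card_le_card_of_injOn Prod.snd (fun _ _ => mem_univ _) fun _ hp _ hq hpq =>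
    Prod.ext ((mem_filter.mp hp).2.trans (mem_filter.mp hq).2.symm) hpq

lemma card_filter_fst_eq_zero_of_adj {S : Finset (V × W)}
    (hS : _root_.IsIndepSet (tensorProd G ⊤) (S : Set (V × W))) {u v : V} (huv : G.Adj u v)
    (h2 : 2 ≤ #(S.filter (·.1 = u))) : #(S.filter (·.1 = v)) = 0 := by
  rw [card_eq_zero, filter_eq_empty_iff]
  intro p hp hpv
  obtain ⟨a, ha, b, hb, hab⟩ := one_lt_card.mp h2
  rw [mem_filter] at ha hb
  have hab2 : a.2 ≠ b.2 := fun h => hab (Prod.ext (ha.2.trans hb.2.symm) h)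
  have hadj : ∀ q ∈ S, q.1 = u → q.2 ≠ p.2 → False := fun q hq hqu hqp =>
    hS hq hp ⟨by rw [hqu, hpv]; exact huv, hqp⟩
  by_cases hap : a.2 = p.2
  · exact hadj b hb.1 hb.2 (hap ▸ hab2.symm)
  · exact hadj a ha.1 ha.2 hap

end TensorProduct

theorem stmt16_general (G : SimpleGraph V) [Fintype V] (k : ℕ) (hk : 2 ≤ k) :
    indepRatio (tensorProd G (⊤ : SimpleGraph (Fin k))) ≤
      max (aRatio G) (1 / (k : ℝ)) := by
  classical
  obtain ⟨S, hS, hcard⟩ :=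
    exists_isIndepSet_card_eq_indepNum (tensorProd G (⊤ : SimpleGraph (Fin k)))
  have hsum : #S = ∑ u, #(S.filter (·.1 = u)) :=
    card_eq_sum_card_fiberwise fun p _ => mem_univ p.1
  have hbound := sum_le_max_aRatio_mul (G := G) (by omega)
    (fun u => (card_filter_fst_eq_le S u).trans_eq (Fintype.card_fin k))
    fun u v huv h2 => card_filter_fst_eq_zero_of_adj hS huv h2
  rw [indepRatio, ← hcard, hsum]
  refine div_le_of_le_mul₀ (Nat.cast_nonneg _) ((aRatio_nonneg G).trans (le_max_left _ _)) ?_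
  push_cast [Fintype.card_prod, Fintype.card_fin]
  linarith

theorem stmt16 (G : SimpleGraph V) [Fintype V] [Nonempty V] (k : ℕ) (hk : 2 ≤ k) :
    indepRatio (tensorProd G (⊤ : SimpleGraph (Fin k))) ≤
      max (aRatio G) (1 / (k : ℝ)) :=
  stmt16_general G k hk
end
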